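/- Let C be a target–context category with intrinsic behaviors whose evaluation morphism eval : T⊗C₀ → B is an A-complete parametrization of maps C₀ → B. If s : P⊗C₀ → T⊗C₀ is a universal simulator, then eval∘s : P⊗C₀ → B is also an A-complete parametrization of maps C₀ → B. -/

import Mathlib

open CategoryTheory MonoidalCategory

universe w v u v' u'

/-- A gs-monoidal category: a symmetric monoidal category in which every object carries a
commutative comonoid structure (copy and discard), compatible with tensor products. -/
class GSCat (C : Type u) [Category.{v} C] [MonoidalCategory C] [SymmetricCategory C] where
  copy : ∀ A : C, A ⟶ A ⊗ A
  discard : ∀ A : C, A ⟶ 𝟙_ C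
  copy_assoc : ∀ A : C, copy A ≫ (copy A ▷ A) ≫ (α_ A A A).hom = copy A ≫ (A ◁ copy A)
  copy_comm : ∀ A : C, copy A ≫ (β_ A A).hom = copy A
  copy_counit_left : ∀ A : C, copy A ≫ (discard A ▷ A) ≫ (λ_ A).hom = 𝟙 A
  copy_counit_right : ∀ A : C, copy A ≫ (A ◁ discard A) ≫ (ρ_ A).hom = 𝟙 A
  copy_tensor : ∀ A X : C, copy (A ⊗ X) = (copy A ⊗ₘ copy X) ≫ tensorμ A A X X
  discard_tensor : ∀ A X : C, discard (A ⊗ X) = (discard A ⊗ₘ discard X) ≫ (λ_ (𝟙_ C)).hom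
  discard_unit : discard (𝟙_ C) = 𝟙 (𝟙_ C)

variable {C : Type u} [Category.{v} C] [MonoidalCategory C] [SymmetricCategory C] [GSCat C]

/-- The domain `dom(f) = ρ_A ∘ (id_A ⊗ (ε_X ∘ f)) ∘ Δ_A` of a morphism `f : A ⟶ X`. -/
def gsDom {A X : C} (f : A ⟶ X) : A ⟶ A :=
  GSCat.copy A ≫ (A ◁ (f ≫ GSCat.discard X)) ≫ (ρ_ A).hom

/-- A morphism is normalized if `f ∘ dom(f) = f`. -/
def GsNormalized {A X : C} (f : A ⟶ X) : Prop := gsDom f ≫ f = f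

/-- A morphism is functional if `Δ_X ∘ f = (f ⊗ f) ∘ Δ_A`. -/
def GsFunctional {A X : C} (f : A ⟶ X) : Prop :=
  f ≫ GSCat.copy X = GSCat.copy A ≫ (f ⊗ₘ f)

/-- A morphism is total if `ε_X ∘ f = ε_A`. -/
def GsTotal {A X : C} (f : A ⟶ X) : Prop := f ≫ GSCat.discard X = GSCat.discard A

/-- `f ⊒ g` : `f` agrees with `g` on the domain of `g`, i.e. `f ∘ dom(g) = g`. -/
def GsRestrict {A X : C} (f g : A ⟶ X) : Prop := gsDom g ≫ f = g

/-- A gs-monoidal category is normalized if all of its morphisms are normalized. -/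
class GsNormalizedCat (C : Type u) [Category.{v} C] [MonoidalCategory C]
    [SymmetricCategory C] [GSCat C] : Prop where
  norm : ∀ {A X : C} (f : A ⟶ X), GsNormalized f

/-- Composition of set-valued relations (first `f`, then `g`). -/
def RComp {α β γ : Type*} (f : α → Set β) (g : β → Set γ) : α → Set γ :=
  fun a => {c | ∃ b ∈ f a, c ∈ g b}

/-- Existence of an enhancement map `U → V` with respect to `pre`
(read `pre x y` as "`x ⪰ y`"): a map sending each `u ∈ U` to an element of `V` above it. -/
def IsEnh {X : Type w} (pre : X → X → Prop) (U V : Set X) : Prop :=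
  ∃ e : U → V, ∀ u : U, pre (e u : X) (u : X)

/-- Existence of a degradation map `V → U`: a map sending each `v ∈ V` to an element of `U`
below it. -/
def IsDeg {X : Type w} (pre : X → X → Prop) (U V : Set X) : Prop :=
  ∃ d : V → U, ∀ v : V, pre (v : X) (d v : X)

/-- The imitation relation: `ν` imitates `μ` iff for every `a` in the domain of `μ` there are
an enhancement map `μ a → ν a` and a degradation map `ν a → μ a`. -/
def Imitates {α : Type*} {X : Type w} (pre : X → X → Prop) (ν μ : α → Set X) : Prop :=
  ∀ a : α, (μ a).Nonempty → IsEnh pre (μ a) (ν a) ∧ IsDeg pre (μ a) (ν a)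

/-- A simulator: a morphism `s : P ⊗ C0 ⟶ T ⊗ C0` of the form
`s = (s_T ⊗ s_C) ∘ (Δ_P ⊗ id)` with functional compiler `s_T : P ⟶ T` and
context reduction `s_C : P ⊗ C0 ⟶ C0`. -/
structure Simulator {C : Type u} [Category.{v} C] [MonoidalCategory C] [SymmetricCategory C]
    [GSCat C] (T C0 P : C) where
  s : P ⊗ C0 ⟶ T ⊗ C0
  sT : P ⟶ T
  sC : P ⊗ C0 ⟶ C0
  sT_functional : GsFunctional sT
  split : s = (GSCat.copy P ▷ C0) ≫ (α_ P P C0).hom ≫ (sT ⊗ₘ sC)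

/-- A target--context category with intrinsic behaviors: a behavior structure (a lax
gs-monoidal functor to `Rel`, encoded concretely) for which the evaluation is the shadow
of a morphism `eval : T ⊗ C0 ⟶ B` of the ambient category, i.e. `Beh(eval)` is the
(graph of the) function `evalHat`, together with a preorder `brel` on `Beh(B)`. -/
structure IntrinsicBS (C : Type u) [Category.{v} C] [MonoidalCategory C]
    [SymmetricCategory C] [GSCat C] (T C0 B : C) where
  obj : C → Type w
  map : ∀ {A X : C}, (A ⟶ X) → obj A → Set (obj X)
  map_id : ∀ {A : C} (a : obj A), map (𝟙 A) a = {a}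
  map_comp : ∀ {A X Y : C} (f : A ⟶ X) (g : X ⟶ Y) (a : obj A),
    map (f ≫ g) a = {y | ∃ x ∈ map f a, y ∈ map g x}
  unitSet : Set (obj (𝟙_ C))
  mul : ∀ A X : C, obj A → obj X → Set (obj (A ⊗ X))
  mul_natural : ∀ {A A' X X' : C} (f : A ⟶ A') (g : X ⟶ X')
      (a : obj A) (x : obj X) (y : obj (A' ⊗ X')),
    (∃ a' ∈ map f a, ∃ x' ∈ map g x, y ∈ mul A' X' a' x') ↔
      ∃ z ∈ mul A X a x, y ∈ map (f ⊗ₘ g) z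
  mul_assoc : ∀ {A X Y : C} (a : obj A) (x : obj X) (y : obj Y) (u : obj (A ⊗ (X ⊗ Y))),
    (∃ z ∈ mul A X a x, ∃ v ∈ mul (A ⊗ X) Y z y, u ∈ map (α_ A X Y).hom v) ↔
      ∃ t ∈ mul X Y x y, u ∈ mul A (X ⊗ Y) a t
  mul_left_unit : ∀ {A : C} (a b : obj A),
    (∃ i ∈ unitSet, ∃ z ∈ mul (𝟙_ C) A i a, b ∈ map (λ_ A).hom z) ↔ b = a
  mul_right_unit : ∀ {A : C} (a b : obj A),
    (∃ i ∈ unitSet, ∃ z ∈ mul A (𝟙_ C) a i, b ∈ map (ρ_ A).hom z) ↔ b = a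
  mul_braiding : ∀ {A X : C} (a : obj A) (x : obj X) (u : obj (X ⊗ A)),
    (∃ z ∈ mul A X a x, u ∈ map (β_ A X).hom z) ↔ u ∈ mul X A x a
  map_copy : ∀ {A : C} (a : obj A), map (GSCat.copy A) a = mul A A a a
  map_discard : ∀ {A : C} (a : obj A), map (GSCat.discard A) a = unitSet
  eval : T ⊗ C0 ⟶ B
  evalHat : obj (T ⊗ C0) → obj B
  eval_beh : ∀ x : obj (T ⊗ C0), map eval x = {evalHat x}
  brel : obj B → obj B → Prop
  brel_refl : ∀ b : obj B, brel b b
  brel_trans : ∀ {b₁ b₂ b₃ : obj B}, brel b₁ b₂ → brel b₂ b₃ → brel b₁ b₃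

/-- The ambient imitation relation induced by an intrinsic behavior structure. -/
def IntrinsicBS.aim {T C0 B : C} (β : IntrinsicBS C T C0 B) {A : C}
    (f g : A ⟶ T ⊗ C0) : Prop :=
  Imitates β.brel (fun a => β.evalHat '' β.map f a) (fun a => β.evalHat '' β.map g a)

/-- `F : P ⊗ C0 ⟶ B` is an `A`-complete parametrization of maps `C0 → B` if every
`f : A ⊗ C0 ⟶ B` is parametrized, up to imitation, by a functional `p : A ⟶ P`. -/
def IntrinsicBS.IsCompleteParam {T C0 B : C} (β : IntrinsicBS C T C0 B) (A P : C)
    (F : P ⊗ C0 ⟶ B) : Prop :=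
  ∀ f : A ⊗ C0 ⟶ B, ∃ p : A ⟶ P, GsFunctional p ∧
    Imitates β.brel (β.map ((p ▷ C0) ≫ F)) (β.map f)

/-- `b : A ⟶ B` is a quasi-fixed point of `g : B ⟶ B` if `Beh(b) ⪰ᵢₘ Beh(g ∘ b)`. -/
def IntrinsicBS.QuasiFixed {T C0 B : C} (β : IntrinsicBS C T C0 B) {A : C}
    (b : A ⟶ B) (g : B ⟶ B) : Prop :=
  Imitates β.brel (β.map b) (β.map (b ≫ g))

/-- Universality of a simulator with respect to the ambient imitation relation induced by an
intrinsic behavior structure. -/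
def IntrinsicBS.IsUniversal {T C0 B : C} (β : IntrinsicBS C T C0 B) {P : C}
    (s : Simulator T C0 P) : Prop :=
  ∃ r : T ⟶ P, GsFunctional r ∧ β.aim ((r ▷ C0) ≫ s.s) (𝟙 (T ⊗ C0))

/-!
Given `f`, completeness of `eval` yields a functional `p` with `eval ∘ (p ⊗ id)` imitating `f`,
and universality yields a functional `r` such that, at every behavior `x` of `T ⊗ C0`,
`eval ∘ s ∘ (r ⊗ id)` imitates `eval`. Since `eval` is total, this pointwise imitation survives
precomposition with the relation `Beh(p ⊗ id)`, so `(eval ∘ s) ∘ ((r ∘ p) ⊗ id)` imitates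
`eval ∘ (p ⊗ id)`, and by transitivity it imitates `f`; the parameter `r ∘ p` is functional.
-/

section Imitation

variable {X : Type w} {pre : X → X → Prop}

theorem isEnh_iff {U V : Set X} : IsEnh pre U V ↔ ∀ u ∈ U, ∃ v ∈ V, pre v u := by
  constructor
  · rintro ⟨e, he⟩ u hu
    exact ⟨e ⟨u, hu⟩, (e ⟨u, hu⟩).2, he ⟨u, hu⟩⟩
  · intro h
    choose e he using h
    exact ⟨fun u => ⟨e u u.2, (he u u.2).1⟩, fun u => (he u u.2).2⟩

theorem isDeg_iff {U V : Set X} : IsDeg pre U V ↔ ∀ v ∈ V, ∃ u ∈ U, pre v u := by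
  constructor
  · rintro ⟨d, hd⟩ v hv
    exact ⟨d ⟨v, hv⟩, (d ⟨v, hv⟩).2, hd ⟨v, hv⟩⟩
  · intro h
    choose d hd using h
    exact ⟨fun v => ⟨d v v.2, (hd v v.2).1⟩, fun v => (hd v v.2).2⟩

theorem Imitates.trans {α : Type*} {ν μ κ : α → Set X} (hνμ : Imitates pre ν μ)
    (hμκ : Imitates pre μ κ) (htrans : ∀ {x y z : X}, pre x y → pre y z → pre x z) :
    Imitates pre ν κ := by
  intro a hκ
  obtain ⟨heμκ, hdμκ⟩ := hμκ a hκ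
  have hμ : (μ a).Nonempty := by
    obtain ⟨x, hx⟩ := hκ
    obtain ⟨y, hy, -⟩ := isEnh_iff.1 heμκ x hx
    exact ⟨y, hy⟩
  obtain ⟨heνμ, hdνμ⟩ := hνμ a hμ
  constructor
  · refine isEnh_iff.2 fun x hx => ?_
    obtain ⟨y, hy, hyx⟩ := isEnh_iff.1 heμκ x hx
    obtain ⟨z, hz, hzy⟩ := isEnh_iff.1 heνμ y hy
    exact ⟨z, hz, htrans hzy hyx⟩
  · refine isDeg_iff.2 fun z hz => ?_
    obtain ⟨y, hy, hzy⟩ := isDeg_iff.1 hdνμ z hz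
    obtain ⟨x, hx, hyx⟩ := isDeg_iff.1 hdμκ y hy
    exact ⟨x, hx, htrans hzy hyx⟩

theorem Imitates.rcomp {α β : Type*} {ν ν' : β → Set X} (h : Imitates pre ν ν')
    (hν' : ∀ b, (ν' b).Nonempty) (μ : α → Set β) :
    Imitates pre (RComp μ ν) (RComp μ ν') := by
  intro a _
  constructor
  · refine isEnh_iff.2 ?_
    rintro u ⟨b, hb, hu⟩
    obtain ⟨v, hv, hvu⟩ := isEnh_iff.1 (h b ⟨u, hu⟩).1 u hu
    exact ⟨v, ⟨b, hb, hv⟩, hvu⟩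
  · refine isDeg_iff.2 ?_
    rintro v ⟨b, hb, hv⟩
    obtain ⟨u, hu, hvu⟩ := isDeg_iff.1 (h b (hν' b)).2 v hv
    exact ⟨u, ⟨b, hb, hu⟩, hvu⟩

end Imitation

theorem GsFunctional.comp {A X Y : C} {f : A ⟶ X} {g : X ⟶ Y}
    (hf : GsFunctional f) (hg : GsFunctional g) : GsFunctional (f ≫ g) := by
  unfold GsFunctional at *
  rw [Category.assoc, hg, ← Category.assoc, hf, Category.assoc, tensorHom_comp_tensorHom]

namespace IntrinsicBS

variable {T C0 B : C} (β : IntrinsicBS C T C0 B)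

theorem map_comp_eq_rcomp {A X Y : C} (f : A ⟶ X) (g : X ⟶ Y) :
    β.map (f ≫ g) = RComp (β.map f) (β.map g) :=
  funext (β.map_comp f g)

theorem map_eval_nonempty (x : β.obj (T ⊗ C0)) : (β.map β.eval x).Nonempty := by
  rw [β.eval_beh]
  exact Set.singleton_nonempty _

theorem map_comp_eval {A : C} (f : A ⟶ T ⊗ C0) :
    β.map (f ≫ β.eval) = fun a => β.evalHat '' β.map f a := by
  funext a
  ext y
  simp [β.map_comp, β.eval_beh, eq_comm]

theorem aim_iff {A : C} (f g : A ⟶ T ⊗ C0) :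
    β.aim f g ↔ Imitates β.brel (β.map (f ≫ β.eval)) (β.map (g ≫ β.eval)) := by
  rw [aim, map_comp_eval, map_comp_eval]

end IntrinsicBS

theorem universal_complete_param_general {T C0 B : C}
    (β : IntrinsicBS C T C0 B) {A P : C}
    (heval : β.IsCompleteParam A T β.eval)
    (s : Simulator T C0 P) (hs : β.IsUniversal s) :
    β.IsCompleteParam A P (s.s ≫ β.eval) := by
  intro f
  obtain ⟨p, hp, hpf⟩ := heval f
  obtain ⟨r, hr, hrs⟩ := hs
  refine ⟨p ≫ r, hp.comp hr, ?_⟩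
  have hsim : Imitates β.brel (β.map ((r ▷ C0) ≫ s.s ≫ β.eval)) (β.map β.eval) := by
    simpa using (β.aim_iff _ _).1 hrs
  have hpsim : Imitates β.brel (β.map (((p ≫ r) ▷ C0) ≫ s.s ≫ β.eval))
      (β.map ((p ▷ C0) ≫ β.eval)) := by
    rw [comp_whiskerRight, Category.assoc, β.map_comp_eq_rcomp (p ▷ C0),
      β.map_comp_eq_rcomp (p ▷ C0)]
    exact hsim.rcomp β.map_eval_nonempty _
  exact hpsim.trans hpf β.brel_trans

/-- if `eval` is an `A`-complete parametrization of maps `C0 → B` and `s` is a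
universal simulator, then `eval ∘ s` is also an `A`-complete parametrization. -/
theorem universal_complete_param [GsNormalizedCat C] {T C0 B : C}
    (β : IntrinsicBS C T C0 B) {A P : C}
    (heval : β.IsCompleteParam A T β.eval)
    (s : Simulator T C0 P) (hs : β.IsUniversal s) :
    β.IsCompleteParam A P (s.s ≫ β.eval) :=
  universal_complete_param_general β heval s hs
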